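/- arXiv:2107.10665 — 2 statements merged into one kernel-verified Lean document; each statement's English description precedes it below -/
import Mathlib

section
/- The ℝ-vector space of all continuous functions Φ : [0,2π] → ℝ such that Φ(0) = 0 and Φ is differentiable with Φ′(t) = 0 at a.e. t ∈ [0,2π] is infinite-dimensional: for every n ∈ ℕ there exist n linearly independent such functions. -/
/-!
The Cantor function `F` is the fixed point of `g ↦ (g (3 ·) + g (3 · - 2)) / 2`, a `1/2`-contraction
on continuous functions vanishing on `(-∞, 0]` and equal to `1` on `[1, ∞)`. By this functional
equation, the set `B` of points near which `F` is not locally constant satisfies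
`B ⊆ B / 3 ∪ (B + 2) / 3`, so `|B| ≤ 2 |B| / 3`, and `|B| = 0` since `B ⊆ [0, 1]`; hence `F' = 0`
a.e. The rescaled translates `t ↦ F (n t / 2π - i)`, `i < n`, evaluated where `n t / 2π = j + 1/2`,
form a triangular matrix with diagonal `F (1/2) = 1/2`, so they are linearly independent.
-/

open MeasureTheory Set Real Filter Topology
open scoped BoundedContinuousFunction

namespace CantorFunction

def staircases : Set (ℝ →ᵇ ℝ) := {g | (∀ x ≤ 0, g x = 0) ∧ ∀ x, 1 ≤ x → g x = 1}

theorem isClosed_staircases : IsClosed staircases := by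
  simp only [staircases, ofPred_and, ofPred_forall]
  refine .inter (isClosed_iInter fun x => isClosed_iInter fun _ => ?_)
    (isClosed_iInter fun x => isClosed_iInter fun _ => ?_) <;>
  exact isClosed_eq (continuous_eval_const x) continuous_const

instance : CompleteSpace staircases := isClosed_staircases.completeSpace_coe

instance : Nonempty staircases :=
  ⟨⟨.ofNormedAddCommGroup (fun x => max 0 (min x 1)) (by fun_prop) 1 fun x => by
      rw [Real.norm_eq_abs, abs_le]; constructor <;> simp,
    fun x hx => by simp [hx], fun x hx => by simp [hx]⟩⟩

noncomputable def step (g : ℝ →ᵇ ℝ) : ℝ →ᵇ ℝ :=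
  (2⁻¹ : ℝ) • (g.compContinuous ⟨(3 * ·), by fun_prop⟩ +
    g.compContinuous ⟨(3 * · - 2), by fun_prop⟩)

theorem step_apply (g : ℝ →ᵇ ℝ) (x : ℝ) : step g x = (g (3 * x) + g (3 * x - 2)) / 2 := by
  simp only [step, BoundedContinuousFunction.coe_smul, BoundedContinuousFunction.coe_add,
    BoundedContinuousFunction.compContinuous_apply, ContinuousMap.coe_mk, Pi.add_apply,
    smul_eq_mul]
  ring

theorem step_mem_staircases {g : ℝ →ᵇ ℝ} (hg : g ∈ staircases) : step g ∈ staircases := by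
  refine ⟨fun x hx => ?_, fun x hx => ?_⟩ <;> rw [step_apply]
  · rw [hg.1 _ (by linarith), hg.1 _ (by linarith)]; norm_num
  · rw [hg.2 _ (by linarith), hg.2 _ (by linarith)]; norm_num

/-- The points `3x` and `3x - 2` are `2` apart, so at most one of them lies in `(0, 1)`, where
two staircases can differ. -/
theorem step_dist_le {g h : ℝ →ᵇ ℝ} (hg : g ∈ staircases) (hh : h ∈ staircases) :
    dist (step g) (step h) ≤ 2⁻¹ * dist g h := by
  refine (BoundedContinuousFunction.dist_le (by positivity)).2 fun x => ?_
  have hdist (y : ℝ) : |g y - h y| ≤ dist g h := by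
    simpa only [Real.dist_eq] using BoundedContinuousFunction.dist_coe_le_dist (f := g) (g := h) y
  have hsplit : g (3 * x) = h (3 * x) ∨ g (3 * x - 2) = h (3 * x - 2) := by
    rcases le_or_gt (3 * x - 2) 0 with hx | hx
    · exact .inr (by rw [hg.1 _ hx, hh.1 _ hx])
    · exact .inl (by rw [hg.2 _ (by linarith), hh.2 _ (by linarith)])
  rw [step_apply, step_apply, Real.dist_eq, ← sub_div, add_sub_add_comm, abs_div, abs_two,
    div_eq_inv_mul]
  gcongr
  rcases hsplit with he | he <;> rw [he, sub_self]
  · simpa only [zero_add] using hdist _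
  · simpa only [add_zero] using hdist _

theorem contractingWith_step :
    ContractingWith 2⁻¹ (fun g : staircases => (⟨step g, step_mem_staircases g.2⟩ : staircases)) :=
  ⟨by norm_num, .of_dist_le_mul fun g h => by
    rw [Subtype.dist_eq, Subtype.dist_eq]; push_cast; exact step_dist_le g.2 h.2⟩

end CantorFunction

open CantorFunction

noncomputable def cantorFunction (x : ℝ) : ℝ := (contractingWith_step.fixedPoint _).1 x

theorem continuous_cantorFunction : Continuous cantorFunction :=
  (contractingWith_step.fixedPoint _).1.continuous

theorem cantorFunction_of_nonpos {x : ℝ} (hx : x ≤ 0) : cantorFunction x = 0 :=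
  (contractingWith_step.fixedPoint _).2.1 x hx

theorem cantorFunction_of_one_le {x : ℝ} (hx : 1 ≤ x) : cantorFunction x = 1 :=
  (contractingWith_step.fixedPoint _).2.2 x hx

theorem cantorFunction_eq_average (x : ℝ) :
    cantorFunction x = (cantorFunction (3 * x) + cantorFunction (3 * x - 2)) / 2 := by
  have h := congrArg Subtype.val contractingWith_step.fixedPoint_isFixedPt
  exact (DFunLike.congr_fun h x).symm.trans (step_apply _ x)

theorem cantorFunction_half : cantorFunction (1 / 2) = 1 / 2 := by
  rw [cantorFunction_eq_average, cantorFunction_of_one_le (by norm_num),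
    cantorFunction_of_nonpos (by norm_num)]
  norm_num

theorem volume_preimage_mul_add {a : ℝ} (ha : a ≠ 0) (b : ℝ) (s : Set ℝ) :
    volume ((fun x => a * x + b) ⁻¹' s) = ENNReal.ofReal |a⁻¹| * volume s := by
  rw [show (fun x => a * x + b) ⁻¹' s = (a * ·) ⁻¹' ((· + b) ⁻¹' s) from rfl,
    Real.volume_preimage_mul_left ha, measure_preimage_add_right]

theorem volume_eq_zero_of_subset_preimage_union {s : Set ℝ} (hs : volume s ≠ ⊤) {a : ℝ}
    (ha : 2 < |a|) (b c : ℝ)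
    (hsub : s ⊆ (fun x => a * x + b) ⁻¹' s ∪ (fun x => a * x + c) ⁻¹' s) : volume s = 0 := by
  have ha0 : a ≠ 0 := by rintro rfl; norm_num at ha
  have hle : volume s ≤ 2 * ENNReal.ofReal |a⁻¹| * volume s :=
    calc volume s ≤ volume ((fun x => a * x + b) ⁻¹' s) + volume ((fun x => a * x + c) ⁻¹' s) :=
          (measure_mono hsub).trans (measure_union_le _ _)
      _ = 2 * ENNReal.ofReal |a⁻¹| * volume s := by
          rw [volume_preimage_mul_add ha0, volume_preimage_mul_add ha0]; ring
  have hlt : 2 * ENNReal.ofReal |a⁻¹| < 1 := by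
    rw [abs_inv, ← ENNReal.ofReal_ofNat, ← ENNReal.ofReal_mul zero_le_two, ← ENNReal.ofReal_one,
      ENNReal.ofReal_lt_ofReal_iff one_pos, ← div_eq_mul_inv, div_lt_one (by linarith)]
    exact ha
  by_contra h0
  exact hlt.not_ge ((ENNReal.mul_le_mul_iff_left h0 hs).1 (by rwa [one_mul]))

theorem Filter.EventuallyConst.hasDerivAt_zero {𝕜 F : Type*} [NontriviallyNormedField 𝕜]
    [NormedAddCommGroup F] [NormedSpace 𝕜 F] {f : 𝕜 → F} {x : 𝕜}
    (h : EventuallyConst f (𝓝 x)) : HasDerivAt f 0 x := by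
  obtain ⟨c, hc⟩ := eventuallyConst_iff_exists_eventuallyEq.1 h
  exact (hasDerivAt_const x c).congr_of_eventuallyEq hc

theorem ae_hasDerivAt_comp_mul_add_zero {g : ℝ → ℝ}
    (hg : volume {x | ¬EventuallyConst g (𝓝 x)} = 0) {a : ℝ} (ha : a ≠ 0) (b : ℝ) :
    ∀ᵐ t, HasDerivAt (fun t => g (a * t + b)) 0 t := by
  have hnull : volume ((fun t => a * t + b) ⁻¹' {x | ¬EventuallyConst g (𝓝 x)}) = 0 := by
    rw [volume_preimage_mul_add ha, hg, mul_zero]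
  filter_upwards [measure_eq_zero_iff_ae_notMem.1 hnull] with t ht
  have hconst : EventuallyConst g (𝓝 (a * t + b)) := not_not.1 ht
  exact (hconst.comp_tendsto ((continuous_const.mul continuous_id).add
    continuous_const).continuousAt).hasDerivAt_zero

theorem cantorFunction_nonconst_subset_Icc :
    {x | ¬EventuallyConst cantorFunction (𝓝 x)} ⊆ Icc 0 1 := by
  intro x hx
  by_contra hmem
  rcases not_and_or.1 hmem with h | h <;> push Not at h <;> apply hx
  · exact (EventuallyConst.const 0).congr <| (eventually_lt_nhds h).mono fun y hy =>
      (cantorFunction_of_nonpos hy.le).symm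
  · exact (EventuallyConst.const 1).congr <| (eventually_gt_nhds h).mono fun y hy =>
      (cantorFunction_of_one_le hy.le).symm

theorem cantorFunction_nonconst_subset_preimage_union :
    {x | ¬EventuallyConst cantorFunction (𝓝 x)} ⊆
      (fun x => 3 * x + 0) ⁻¹' {x | ¬EventuallyConst cantorFunction (𝓝 x)} ∪
        (fun x => 3 * x + -2) ⁻¹' {x | ¬EventuallyConst cantorFunction (𝓝 x)} := by
  intro x hx
  by_contra h
  simp only [mem_union, mem_preimage, mem_ofPred_eq, not_or, not_not, add_zero,
    ← sub_eq_add_neg] at h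
  refine hx (.congr ?_ (.of_forall fun y => (cantorFunction_eq_average y).symm))
  have hleft := h.1.comp_tendsto ((continuous_const.mul continuous_id).tendsto x)
  have hright := h.2.comp_tendsto (((continuous_const.mul continuous_id).sub
    continuous_const).tendsto x)
  exact (hleft.add hright).comp (· / 2)

theorem volume_cantorFunction_nonconst :
    volume {x | ¬EventuallyConst cantorFunction (𝓝 x)} = 0 :=
  volume_eq_zero_of_subset_preimage_union
    (ne_top_of_le_ne_top (by simp) (measure_mono cantorFunction_nonconst_subset_Icc))
    (by norm_num) 0 (-2) cantorFunction_nonconst_subset_preimage_union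

theorem linearIndependent_of_eval_lowerTriangular {ι X R : Type*} [Fintype ι] [LinearOrder ι]
    [CommRing R] [IsDomain R] (v : ι → X → R) (x : ι → X)
    (hlower : ∀ i j, i < j → v j (x i) = 0) (hdiag : ∀ i, v i (x i) ≠ 0) :
    LinearIndependent R v := by
  classical
  let M : Matrix ι ι R := .of fun i j => v j (x i)
  have hdet : M.det ≠ 0 := by
    rw [Matrix.det_of_isLowerTriangular M hlower]
    exact Finset.prod_ne_zero_iff.2 fun i _ => hdiag i
  exact .of_comp (LinearMap.funLeft R R x) (Matrix.linearIndependent_cols_of_det_ne_zero hdet)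

theorem cantorFunction_nat_add_half_sub_nat {i j : ℕ} (h : j < i) :
    cantorFunction (j + 1 / 2 - i) = 0 := by
  have : (j : ℝ) + 1 ≤ i := by exact_mod_cast h
  exact cantorFunction_of_nonpos (by linarith)

theorem linearIndependent_cantorFunction_translates (n : ℕ) {L : ℝ} (hL : 0 < L) :
    LinearIndependent ℝ fun i : Fin n =>
      (Icc 0 L).domRestrict fun t => cantorFunction (n / L * t - i) := by
  set a : ℝ := n / L with a_def
  have ha (i : Fin n) : 0 < a := by have := i.pos; positivity
  have hmem (j : Fin n) : ((j : ℝ) + 1 / 2) / a ∈ Icc 0 L := by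
    have hj : (j : ℝ) + 1 ≤ n := by exact_mod_cast j.isLt
    refine ⟨div_nonneg (by positivity) (ha j).le, ?_⟩
    rw [div_le_iff₀ (ha j), show L * a = n by rw [a_def]; field_simp]
    linarith
  have heval (i j : Fin n) : a * (((j : ℝ) + 1 / 2) / a) - i = j + 1 / 2 - i := by
    rw [mul_div_cancel₀ _ (ha i).ne']
  refine linearIndependent_of_eval_lowerTriangular _ (fun j => ⟨_, hmem j⟩)
    (fun j i hji => ?_) fun i => ?_
  · change cantorFunction (a * _ - i) = 0
    rw [heval]
    exact cantorFunction_nat_add_half_sub_nat hji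
  · change cantorFunction (a * _ - i) ≠ 0
    rw [heval, add_sub_cancel_left, cantorFunction_half]
    exact one_half_pos.ne'

/-- The space of continuous functions `Φ : [0,2π] → ℝ` with `Φ(0) = 0` which
are differentiable with derivative `0` at a.e. point of `[0,2π]` is infinite dimensional:
for every `n` there are `n` linearly independent such functions. -/
theorem singular_functions_infinite_dimension (n : ℕ) :
    ∃ f : Fin n → ℝ → ℝ,
      (∀ i, ContinuousOn (f i) (Set.Icc 0 (2*π)) ∧
        f i 0 = 0 ∧
        (∀ᵐ t ∂(volume.restrict (Set.Icc (0:ℝ) (2*π))), HasDerivAt (f i) 0 t)) ∧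
      LinearIndependent ℝ (fun i => (Set.Icc (0:ℝ) (2*π)).restrict (f i)) := by
  refine ⟨fun i t => cantorFunction (n / (2 * π) * t - i), fun i => ⟨?_, ?_, ?_⟩,
    linearIndependent_cantorFunction_translates n two_pi_pos⟩
  · exact (continuous_cantorFunction.comp (by fun_prop)).continuousOn
  · simpa using cantorFunction_of_nonpos (neg_nonpos.2 (Nat.cast_nonneg (i : ℕ)))
  · have ha : (n : ℝ) / (2 * π) ≠ 0 := by have := i.pos; positivity
    simpa only [sub_eq_add_neg] using ae_restrict_of_ae
      (ae_hasDerivAt_comp_mul_add_zero volume_cantorFunction_nonconst ha (-i))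
end

section
/- Let U : 𝔻 → ℝ be continuously differentiable, let ζ ∈ ∂𝔻, and let ν ∈ ℂ with |ν| = 1 satisfy Re( n(ζ) · conj(ν) ) > 0, where n(ζ) := −ζ is the unit inner normal to ∂𝔻 at ζ. Suppose the function z ↦ ∂U/∂ν(z) has finite angular limit L at ζ. Then ζ + t·ν ∈ 𝔻 for all sufficiently small t > 0, the finite limit U(ζ) := lim_{t→0⁺} U(ζ + t·ν) exists, and lim_{t→0⁺} (U(ζ + t·ν) − U(ζ))/t = L. -/
/-!
Write `a = Re(-ζ ν̄) > 0`. Since `‖ζ + tν‖² = 1 - 2at + t²`, for `0 < t ≤ a` the point `ζ + tν` lies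
in the disk at distance at least `at/2` from the circle, so the segment approaches `ζ`
nontangentially, inside the region of opening `2/a`. Hence `g(t) = U(ζ + tν)` has derivative
`∂U/∂ν(ζ + tν) → L` as `t → 0⁺`. A bounded derivative makes `g` Lipschitz near `0`, so `g(0⁺)`
exists, and `g` extended by this value has one-sided derivative `L` at `0` by the derivative
limit theorem.
-/

open MeasureTheory Metric Set Filter

noncomputable section

/-- The nontangential approach region in `D` at the boundary point `ω` with opening `c`. -/
def NTRegion (D : Set ℂ) (ω : ℂ) (c : ℝ) : Set ℂ :=
  {z ∈ D | ‖z - ω‖ ≤ c * Metric.infDist z (frontier D)}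

/-- `v` has angular (nontangential) limit `L` at the boundary point `ω` of `D`. -/
def HasAngularLimit {E : Type*} [TopologicalSpace E]
    (D : Set ℂ) (v : ℂ → E) (ω : ℂ) (L : E) : Prop :=
  ∀ c : ℝ, 1 < c → Filter.Tendsto v (nhdsWithin ω (NTRegion D ω c)) (nhds L)

open Topology

section EndpointDerivative

variable {E : Type*} [NormedAddCommGroup E] [NormedSpace ℝ E] {g g' : ℝ → E} {a : ℝ}

theorem exists_tendsto_nhdsGT_of_isBoundedUnder_deriv [CompleteSpace E]
    (hg : ∀ᶠ t in 𝓝[>] a, HasDerivAt g (g' t) t)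
    (hbdd : IsBoundedUnder (· ≤ ·) (𝓝[>] a) fun t => ‖g' t‖₊) :
    ∃ b, Tendsto g (𝓝[>] a) (𝓝 b) := by
  obtain ⟨C, hC⟩ := hbdd
  obtain ⟨δ, hδ, hsub⟩ := mem_nhdsGT_iff_exists_Ioo_subset.1 (hg.and (eventually_map.1 hC))
  have hlip : LipschitzOnWith C g (Ioo a δ) :=
    (convex_Ioo a δ).lipschitzOnWith_of_nnnorm_hasDerivWithin_le
      (fun t ht => (hsub ht).1.hasDerivWithinAt) fun t ht => (hsub ht).2
  have hcauchy : Cauchy (𝓝[>] a) := cauchy_nhds.mono nhdsWithin_le_nhds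
  exact cauchy_map_iff_exists_tendsto.1 <|
    hcauchy.map_of_le hlip.uniformContinuousOn (le_principal_iff.2 (Ioo_mem_nhdsGT hδ))

theorem tendsto_slope_nhdsGT_of_tendsto_deriv {b L : E}
    (hg : ∀ᶠ t in 𝓝[>] a, HasDerivAt g (g' t) t) (hb : Tendsto g (𝓝[>] a) (𝓝 b))
    (hL : Tendsto g' (𝓝[>] a) (𝓝 L)) :
    Tendsto (fun t => (t - a)⁻¹ • (g t - b)) (𝓝[>] a) (𝓝 L) := by
  classical
  set G := Function.update g a b
  have hG : ∀ᶠ t in 𝓝[>] a, HasDerivAt G (g' t) t := by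
    filter_upwards [hg, self_mem_nhdsWithin] with t ht hta
    exact ht.congr_of_eventuallyEq <|
      (eventually_ne_nhds (ne_of_gt hta)).mono fun s hs => Function.update_of_ne hs _ _
  obtain ⟨δ, hδ, hsub⟩ := mem_nhdsGT_iff_exists_Ioo_subset.1 hG
  have hderiv : HasDerivWithinAt G L (Ici a) a := by
    refine hasDerivWithinAt_Ici_of_tendsto_deriv (s := Ioo a δ)
      (fun t ht => (hsub ht).differentiableAt.differentiableWithinAt) ?_ (Ioo_mem_nhdsGT hδ)
      (hL.congr' (hG.mono fun t ht => ht.deriv.symm))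
    rw [continuousWithinAt_update_same]
    exact hb.mono_left (nhdsWithin_mono _ fun t ht => ht.1.1)
  rw [hasDerivWithinAt_iff_tendsto_slope, Ici_sdiff_left] at hderiv
  refine hderiv.congr' (eventually_nhdsWithin_of_forall fun t ht => ?_)
  simp [G, slope_def_module, (mem_Ioi.1 ht).ne']

end EndpointDerivative

section UnitDisk

variable {ζ ν : ℂ}

theorem norm_add_ofReal_mul_sq (hζ : ‖ζ‖ = 1) (hν : ‖ν‖ = 1) (t : ℝ) :
    ‖ζ + t * ν‖ ^ 2 = 1 - 2 * ((-ζ) * starRingEnd ℂ ν).re * t + t ^ 2 := by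
  have hcross : (ζ * starRingEnd ℂ (t * ν)).re = -(((-ζ) * starRingEnd ℂ ν).re * t) := by
    rw [map_mul, Complex.conj_ofReal, mul_left_comm, Complex.re_ofReal_mul, neg_mul,
      Complex.neg_re]
    ring
  rw [Complex.sq_norm, Complex.normSq_add, hcross, Complex.normSq_mul, Complex.normSq_ofReal,
    ← Complex.sq_norm, ← Complex.sq_norm, hζ, hν]
  ring

theorem re_neg_mul_conj_le_one (hζ : ‖ζ‖ = 1) (hν : ‖ν‖ = 1) :
    ((-ζ) * starRingEnd ℂ ν).re ≤ 1 :=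
  (Complex.re_le_norm _).trans_eq (by simp [hζ, hν])

theorem norm_add_ofReal_mul_le (hζ : ‖ζ‖ = 1) (hν : ‖ν‖ = 1) {t : ℝ} (ht : 0 ≤ t)
    (hta : t ≤ ((-ζ) * starRingEnd ℂ ν).re) :
    ‖ζ + t * ν‖ ≤ 1 - ((-ζ) * starRingEnd ℂ ν).re * t / 2 := by
  have hsq := norm_add_ofReal_mul_sq hζ hν t
  have ha1 := re_neg_mul_conj_le_one hζ hν
  set a := ((-ζ) * starRingEnd ℂ ν).re
  have hrhs : 0 ≤ 1 - a * t / 2 := by nlinarith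
  refine (pow_le_pow_iff_left₀ (norm_nonneg _) hrhs two_ne_zero).1 ?_
  rw [hsq]
  nlinarith [mul_nonneg ht (sub_nonneg.2 hta), sq_nonneg (a * t)]

theorem sub_norm_le_infDist_sphere {E : Type*} [NormedAddCommGroup E] [NormedSpace ℝ E]
    [Nontrivial E] {r : ℝ} (hr : 0 ≤ r) (x : E) : r - ‖x‖ ≤ infDist x (sphere 0 r) :=
  (le_infDist (NormedSpace.sphere_nonempty.2 hr)).2 fun y hy => by
    rw [mem_sphere_zero_iff_norm] at hy
    calc r - ‖x‖ = ‖y‖ - ‖x‖ := by rw [hy]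
      _ ≤ ‖y - x‖ := norm_sub_norm_le y x
      _ = dist x y := by rw [dist_comm, dist_eq_norm]

theorem add_ofReal_mul_mem_NTRegion (hζ : ‖ζ‖ = 1) (hν : ‖ν‖ = 1)
    (hpos : 0 < ((-ζ) * starRingEnd ℂ ν).re) {t : ℝ} (ht : 0 < t)
    (hta : t ≤ ((-ζ) * starRingEnd ℂ ν).re) :
    ζ + t * ν ∈ NTRegion (ball 0 1) ζ (2 / ((-ζ) * starRingEnd ℂ ν).re) := by
  have hle := norm_add_ofReal_mul_le hζ hν ht.le hta
  set a := ((-ζ) * starRingEnd ℂ ν).re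
  refine ⟨mem_ball_zero_iff.2 (hle.trans_lt (by linarith [mul_pos hpos ht])), ?_⟩
  rw [frontier_ball 0 one_ne_zero]
  calc ‖ζ + t * ν - ζ‖ = t := by simp [hν, ht.le]
    _ = 2 / a * (a * t / 2) := by field_simp
    _ ≤ 2 / a * infDist (ζ + t * ν) (sphere 0 1) := by
        gcongr
        linarith [sub_norm_le_infDist_sphere zero_le_one (ζ + t * ν)]

theorem tendsto_add_ofReal_mul_nhdsWithin_NTRegion (hζ : ‖ζ‖ = 1) (hν : ‖ν‖ = 1)
    (hpos : 0 < ((-ζ) * starRingEnd ℂ ν).re) :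
    Tendsto (fun t : ℝ => ζ + t * ν) (𝓝[>] 0)
      (𝓝[NTRegion (ball 0 1) ζ (2 / ((-ζ) * starRingEnd ℂ ν).re)] ζ) := by
  refine tendsto_nhdsWithin_iff.2 ⟨?_, ?_⟩
  · have hcont : Continuous fun t : ℝ => ζ + t * ν := by fun_prop
    exact (hcont.tendsto' 0 ζ (by simp)).mono_left nhdsWithin_le_nhds
  · filter_upwards [Ioc_mem_nhdsGT hpos] with t ht
    exact add_ofReal_mul_mem_NTRegion hζ hν hpos ht.1 ht.2

end UnitDisk

theorem DifferentiableAt.hasDerivAt_comp_add_ofReal_mul {F : Type*} [NormedAddCommGroup F]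
    [NormedSpace ℝ F] {U : ℂ → F} {z v : ℂ} {t : ℝ} (h : DifferentiableAt ℝ U (z + t * v)) :
    HasDerivAt (fun s : ℝ => U (z + s * v)) (fderiv ℝ U (z + t * v) v) t := by
  have hline : HasDerivAt (fun s : ℝ => z + s * v) v t := by
    simpa using ((Complex.ofRealCLM.hasDerivAt (x := t)).mul_const v).const_add z
  exact h.hasFDerivAt.comp_hasDerivAt t hline

/-- If `U` is `C¹` on `𝔻`, `ζ ∈ ∂𝔻`, `ν` is a unit vector with positive
projection on the inner normal `n(ζ) = −ζ`, and `∂U/∂ν` has finite angular limit `L` at `ζ`,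
then `ζ + tν ∈ 𝔻` for small `t > 0`, the boundary value `U(ζ)` along direction `ν` exists,
and the difference quotients along `ν` converge to `L`. -/
theorem directional_derivative_boundary_limit (U : ℂ → ℝ)
    (hU : ContDiffOn ℝ 1 U (Metric.ball (0:ℂ) 1))
    (ζ ν : ℂ) (hζ : ζ ∈ Metric.sphere (0:ℂ) 1) (hν : ‖ν‖ = 1)
    (hpos : 0 < ((-ζ) * (starRingEnd ℂ) ν).re)
    (L : ℝ)
    (hlim : HasAngularLimit (Metric.ball (0:ℂ) 1) (fun z => fderiv ℝ U z ν) ζ L) :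
    (∀ᶠ t : ℝ in nhdsWithin 0 (Set.Ioi 0), ζ + (t : ℂ) * ν ∈ Metric.ball (0:ℂ) 1) ∧
    ∃ Uζ : ℝ,
      Filter.Tendsto (fun t : ℝ => U (ζ + (t : ℂ) * ν))
        (nhdsWithin 0 (Set.Ioi 0)) (nhds Uζ) ∧
      Filter.Tendsto (fun t : ℝ => (U (ζ + (t : ℂ) * ν) - Uζ) / t)
        (nhdsWithin 0 (Set.Ioi 0)) (nhds L) := by
  rw [mem_sphere_zero_iff_norm] at hζ
  have hline := tendsto_add_ofReal_mul_nhdsWithin_NTRegion hζ hν hpos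
  have hball : ∀ᶠ t : ℝ in 𝓝[>] 0, ζ + t * ν ∈ ball 0 1 :=
    (tendsto_nhdsWithin_iff.1 hline).2.mono fun _ ht => ht.1
  have hderiv : ∀ᶠ t : ℝ in 𝓝[>] 0,
      HasDerivAt (fun s : ℝ => U (ζ + s * ν)) (fderiv ℝ U (ζ + t * ν) ν) t :=
    hball.mono fun _ ht => ((hU.differentiableOn one_ne_zero).differentiableAt
      (isOpen_ball.mem_nhds ht)).hasDerivAt_comp_add_ofReal_mul
  have hc : 1 < 2 / ((-ζ) * starRingEnd ℂ ν).re :=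
    (one_lt_div hpos).2 (by linarith [re_neg_mul_conj_le_one hζ hν])
  have hL := (hlim _ hc).comp hline
  obtain ⟨Uζ, hUζ⟩ := exists_tendsto_nhdsGT_of_isBoundedUnder_deriv hderiv
    hL.nnnorm.isBoundedUnder_le
  refine ⟨hball, Uζ, hUζ, ?_⟩
  simpa [div_eq_inv_mul] using tendsto_slope_nhdsGT_of_tendsto_deriv hderiv hUζ hL
end
end
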